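/- Let n ≥ 3 and let γ₁, γ₂, γ₃ be real numbers with γ₁ > 0, and assume that either γ₃ > 0, or (γ₂ > 0 and γ₂ ≠ γ₁). Define the hyperplanes Π₁ = span{e₁, …, e_{n−1}}, Π₂ = span{e₁, …, e_{n−2}, e_{n−1} + γ₁ eₙ}, Π₃ = span{e₁, …, e_{n−3}, e_{n−2} + γ₃ eₙ, e_{n−1} + γ₂ eₙ} in ℝⁿ. If g is a real symmetric n×n matrix such that ⟨g v, w⟩ = 0 for all v, w ∈ Π_k, for each k = 1, 2, 3, then g = 0. -/

import Mathlib

/-!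
Isotropy of Π₁ kills every entry `g i j` with `i, j < n`. Pairing `eᵢ` (`i < n - 1`) with
`u = e_{n-1} + γ₁ eₙ` inside Π₂ kills `g i n`, and isotropy of `u` itself leaves the single
relation `2 g_{n-1,n} + γ₁ g_{nn} = 0`. Π₃ supplies a second, independent relation: `γ₃² g_{nn} = 0`
from `e_{n-2} + γ₃ eₙ`, or `2 g_{n-1,n} + γ₂ g_{nn} = 0` from `e_{n-1} + γ₂ eₙ` with `γ₂ ≠ γ₁`.
-/

namespace Matrix

variable {ι R : Type*}

theorem IsSymm.eq_zero_of_forall_ne [Zero R] {g : Matrix ι ι R} (hg : g.IsSymm) (c : ι)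
    (h : ∀ i j, i ≠ c → j ≠ c → g i j = 0) (hc : ∀ i, g i c = 0) : g = 0 := by
  ext i j
  rcases eq_or_ne j c with rfl | hj
  · exact hc i
  rcases eq_or_ne i c with rfl | hi
  · rw [← hg.apply]; exact hc j
  · exact h i j hi hj

variable [Fintype ι] [DecidableEq ι]

def IsTotallyIsotropic [CommRing R] (g : Matrix ι ι R) (P : Submodule R (ι → R)) : Prop :=
  ∀ v ∈ P, ∀ w ∈ P, g *ᵥ v ⬝ᵥ w = 0

namespace IsTotallyIsotropic

variable [CommRing R] {g : Matrix ι ι R} {P : Submodule R (ι → R)}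

theorem apply_eq_zero (hP : g.IsTotallyIsotropic P) {i j : ι}
    (hi : Pi.single i 1 ∈ P) (hj : Pi.single j 1 ∈ P) : g i j = 0 := by
  simpa [mulVec_single_one, dotProduct_single_one] using hP _ hj _ hi

theorem apply_add_mul_apply_eq_zero (hP : g.IsTotallyIsotropic P) {i a c : ι} {γ : R}
    (hi : Pi.single i 1 ∈ P) (hu : Pi.single a 1 + γ • Pi.single c 1 ∈ P) :
    g i a + γ * g i c = 0 := by
  simpa [mulVec_add, mulVec_smul, mulVec_single_one, dotProduct_single_one] using hP _ hu _ hi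

theorem apply_add_two_mul_add_sq_mul_eq_zero (hP : g.IsTotallyIsotropic P) (hg : g.IsSymm)
    {a c : ι} {γ : R} (hu : Pi.single a 1 + γ • Pi.single c 1 ∈ P) :
    g a a + 2 * γ * g a c + γ ^ 2 * g c c = 0 := by
  have := hP _ hu _ hu
  simp only [mulVec_add, mulVec_smul, mulVec_single_one, dotProduct_add, dotProduct_smul,
    dotProduct_single_one, Pi.add_apply, Pi.smul_apply, col_apply, smul_eq_mul] at this
  linear_combination this - γ * hg.apply a c

end IsTotallyIsotropic

variable {K : Type*} [Field K] [NeZero (2 : K)]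

theorem IsSymm.eq_zero_of_isTotallyIsotropic {g : Matrix ι ι K} (hg : g.IsSymm)
    {c d e : ι} (hdc : d ≠ c) (hec : e ≠ c) (hed : e ≠ d) {γ₁ γ₂ γ₃ : K} (hγ₁ : γ₁ ≠ 0)
    (hγ : γ₃ ≠ 0 ∨ γ₂ ≠ 0 ∧ γ₂ ≠ γ₁) {P₁ P₂ P₃ : Submodule K (ι → K)}
    (h₁ : g.IsTotallyIsotropic P₁) (h₂ : g.IsTotallyIsotropic P₂) (h₃ : g.IsTotallyIsotropic P₃)
    (mem₁ : ∀ i ≠ c, Pi.single i 1 ∈ P₁) (mem₂ : ∀ i, i ≠ c → i ≠ d → Pi.single i 1 ∈ P₂)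
    (hu : Pi.single d 1 + γ₁ • Pi.single c 1 ∈ P₂)
    (hw : Pi.single e 1 + γ₃ • Pi.single c 1 ∈ P₃)
    (hx : Pi.single d 1 + γ₂ • Pi.single c 1 ∈ P₃) : g = 0 := by
  have hblock : ∀ i j, i ≠ c → j ≠ c → g i j = 0 := fun i j hi hj =>
    h₁.apply_eq_zero (mem₁ i hi) (mem₁ j hj)
  have hcol : ∀ i, i ≠ c → i ≠ d → g i c = 0 := by
    intro i hic hid
    have := h₂.apply_add_mul_apply_eq_zero (mem₂ i hic hid) hu
    rw [hblock i d hic hdc, zero_add] at this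
    exact (mul_eq_zero.1 this).resolve_left hγ₁
  have hrel : 2 * g d c + γ₁ * g c c = 0 := by
    have := h₂.apply_add_two_mul_add_sq_mul_eq_zero hg hu
    rw [hblock d d hdc hdc] at this
    have : γ₁ * (2 * g d c + γ₁ * g c c) = 0 := by linear_combination this
    exact (mul_eq_zero.1 this).resolve_left hγ₁
  have hgcc : g c c = 0 := by
    rcases hγ with hγ₃ | ⟨hγ₂, hγ₂₁⟩
    · have := h₃.apply_add_two_mul_add_sq_mul_eq_zero hg hw
      rw [hblock e e hec hec, hcol e hec hed] at this
      simpa [hγ₃] using this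
    · have := h₃.apply_add_two_mul_add_sq_mul_eq_zero hg hx
      rw [hblock d d hdc hdc] at this
      have : γ₂ * (γ₂ - γ₁) * g c c = 0 := by linear_combination this - γ₂ * hrel
      simpa [hγ₂, sub_ne_zero.2 hγ₂₁] using this
  have hgdc : g d c = 0 := by simpa [hgcc, two_ne_zero] using hrel
  refine hg.eq_zero_of_forall_ne c hblock fun i => ?_
  rcases eq_or_ne i c with rfl | hic
  · exact hgcc
  rcases eq_or_ne i d with rfl | hid
  · exact hgdc
  · exact hcol i hic hid

end Matrix

/-- Let `n ≥ 3`, `γ₁ > 0`, and assume `γ₃ > 0` or (`γ₂ > 0` and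
`γ₂ ≠ γ₁`). Consider the hyperplanes
`Pi1 = span{e₁,…,e_{n-1}}`, `Pi2 = span{e₁,…,e_{n-2}, e_{n-1}+γ₁eₙ}`,
`Pi3 = span{e₁,…,e_{n-3}, e_{n-2}+γ₃eₙ, e_{n-1}+γ₂eₙ}`. If a real symmetric matrix `g`
satisfies `⟨g v, w⟩ = 0` for all `v, w ∈ Πₖ`, `k = 1,2,3`, then `g = 0`. -/
theorem stmt8 (n : ℕ) (hn : 3 ≤ n) (γ₁ γ₂ γ₃ : ℝ) (hγ₁ : 0 < γ₁)
    (hcase : 0 < γ₃ ∨ (0 < γ₂ ∧ γ₂ ≠ γ₁))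
    (Pi1 Pi2 Pi3 : Submodule ℝ (Fin n → ℝ))
    (hPi1 : Pi1 = Submodule.span ℝ
      {v : Fin n → ℝ | ∃ i : Fin n, (i : ℕ) < n - 1 ∧ v = Pi.single i (1 : ℝ)})
    (hPi2 : Pi2 = Submodule.span ℝ
      ({v : Fin n → ℝ | ∃ i : Fin n, (i : ℕ) < n - 2 ∧ v = Pi.single i (1 : ℝ)} ∪
        {(Pi.single (⟨n - 2, by omega⟩ : Fin n) (1 : ℝ) : Fin n → ℝ) +
          γ₁ • (Pi.single (⟨n - 1, by omega⟩ : Fin n) (1 : ℝ) : Fin n → ℝ)}))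
    (hPi3 : Pi3 = Submodule.span ℝ
      ({v : Fin n → ℝ | ∃ i : Fin n, (i : ℕ) < n - 3 ∧ v = Pi.single i (1 : ℝ)} ∪
        {(Pi.single (⟨n - 3, by omega⟩ : Fin n) (1 : ℝ) : Fin n → ℝ) +
          γ₃ • (Pi.single (⟨n - 1, by omega⟩ : Fin n) (1 : ℝ) : Fin n → ℝ),
         (Pi.single (⟨n - 2, by omega⟩ : Fin n) (1 : ℝ) : Fin n → ℝ) +
          γ₂ • (Pi.single (⟨n - 1, by omega⟩ : Fin n) (1 : ℝ) : Fin n → ℝ)}))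
    (g : Matrix (Fin n) (Fin n) ℝ) (hg : g.IsSymm)
    (h1 : ∀ v ∈ Pi1, ∀ w ∈ Pi1, g.mulVec v ⬝ᵥ w = 0)
    (h2 : ∀ v ∈ Pi2, ∀ w ∈ Pi2, g.mulVec v ⬝ᵥ w = 0)
    (h3 : ∀ v ∈ Pi3, ∀ w ∈ Pi3, g.mulVec v ⬝ᵥ w = 0) :
    g = 0 := by
  subst hPi1 hPi2 hPi3
  refine hg.eq_zero_of_isTotallyIsotropic ?_ ?_ ?_ hγ₁.ne'
    (hcase.imp ne_of_gt (And.imp_left ne_of_gt)) h1 h2 h3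
    (fun i hi => Submodule.subset_span ⟨i, ?_, rfl⟩)
    (fun i hic hid => Submodule.subset_span (Or.inl ⟨i, ?_, rfl⟩))
    (Submodule.subset_span (Or.inr rfl)) (Submodule.subset_span (Or.inr (Or.inl rfl)))
    (Submodule.subset_span (Or.inr (Or.inr rfl)))
  all_goals simp only [ne_eq, Fin.ext_iff] at *; omega
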